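/- Let l > 0 and l₀ = l/2. Then every positive zero of Φ₀ is simple: if μ > 0 and Φ₀(μ) = 0, then Φ₀'(μ) ≠ 0. -/

import Mathlib

/-- Φ₀(μ) = 2 sin(μ(l−l₀)) sin(μl₀) − sin(μl). -/
noncomputable def Phi0 (l l₀ μ : ℝ) : ℝ :=
  2 * Real.sin (μ * (l - l₀)) * Real.sin (μ * l₀) - Real.sin (μ * l)

lemma Phi0_hasDerivAt (l μ : ℝ) :
    HasDerivAt (Phi0 l (l / 2)) (l * (Real.sin (μ * l) - Real.cos (μ * l))) μ := by
  have hfun : Phi0 l (l / 2) = fun μ : ℝ =>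
      2 * Real.sin (μ * (l / 2)) * Real.sin (μ * (l / 2)) - Real.sin (μ * l) := by
    funext μ
    unfold Phi0
    have : l - l / 2 = l / 2 := by ring
    rw [this]
  rw [hfun]
  have h1 : HasDerivAt (fun μ : ℝ => Real.sin (μ * (l / 2)))
      (Real.cos (μ * (l / 2)) * (l / 2)) μ := (hasDerivAt_mul_const (l / 2)).sin
  have h2 : HasDerivAt (fun μ : ℝ => Real.sin (μ * l)) (Real.cos (μ * l) * l) μ :=
    (hasDerivAt_mul_const l).sin
  have h := (((h1.const_mul 2).mul h1).sub h2)
  convert h using 1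
  case e'_4 => rfl
  case e'_5 => rfl
  case e'_8 => rfl
  have hml : μ * l = 2 * (μ * (l / 2)) := by ring
  rw [hml, Real.sin_two_mul]
  ring

/-- For `l₀ = l/2`, every positive zero of `Φ₀` is simple. -/
theorem Phi0_zeros_simple (l : ℝ) (hl : 0 < l) :
    ∀ μ : ℝ, 0 < μ → Phi0 l (l / 2) μ = 0 → deriv (Phi0 l (l / 2)) μ ≠ 0 := by
  intro μ hμ h0 hd
  rw [(Phi0_hasDerivAt l μ).deriv] at hd
  have hsc : Real.sin (μ * l) = Real.cos (μ * l) := by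
    have := mul_eq_zero.mp hd
    rcases this with h | h
    · exact absurd h (ne_of_gt hl)
    · linarith
  set x := μ * (l / 2) with hx
  have hml : μ * l = 2 * x := by rw [hx]; ring
  have hs2 : Real.sin (μ * l) = 2 * Real.sin x * Real.cos x := by
    rw [hml, Real.sin_two_mul]
  have hc2 : Real.cos (μ * l) = 2 * Real.cos x ^ 2 - 1 := by
    rw [hml, Real.cos_two_mul]
  have hpyth : Real.sin x ^ 2 + Real.cos x ^ 2 = 1 := Real.sin_sq_add_cos_sq x
  have h0' : 2 * Real.sin x * Real.sin x - Real.sin (μ * l) = 0 := by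
    unfold Phi0 at h0
    have : μ * (l - l / 2) = x := by rw [hx]; ring
    rw [this] at h0
    exact h0
  nlinarith [hs2, hc2, hpyth, hsc, h0', sq_nonneg (Real.sin x - Real.cos x),
    sq_nonneg (Real.sin x + Real.cos x), sq_nonneg (Real.sin x * Real.cos x)]
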